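/- arXiv:2504.03985 — 5 statements merged into one kernel-verified Lean document; each statement's English description precedes it below -/
import Mathlib

section
/- Let Θ be a finite linearly ordered set and f, g : Θ → ℝ two functions each satisfying the (weak) single crossing property: for θ' > θ, f(θ) ≥ 0 implies f(θ') ≥ 0, and f(θ) > 0 implies f(θ') > 0 (similarly for g). Suppose f and g satisfy the signed-ratio condition: whenever g(θ) > 0 and f(θ) < 0 one has g(θ')·(−f(θ)) ≥ g(θ)·(−f(θ')) for θ' > θ with f(θ') < 0, and symmetrically with the roles of f and g exchanged. Then f + g satisfies the single crossing property. -/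
/-- The (weak) single crossing property of a real valued function on a linearly
ordered set. -/
def SingleCrossing {Θ : Type*} [LinearOrder Θ] (h : Θ → ℝ) : Prop :=
  ∀ θ θ' : Θ, θ < θ' → (0 ≤ h θ → 0 ≤ h θ') ∧ (0 < h θ → 0 < h θ')

/-- Quah–Strulovici aggregation: if f and g are single crossing and
satisfy the signed-ratio condition, then f + g is single crossing. -/
theorem single_crossing_add_of_signed_ratio {Θ : Type*} [Fintype Θ] [LinearOrder Θ]
    (f g : Θ → ℝ)
    (hf : SingleCrossing f) (hg : SingleCrossing g)
    (hfg : ∀ θ θ' : Θ, θ < θ' → 0 < g θ → f θ < 0 → f θ' < 0 →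
      g θ' * (-f θ) ≥ g θ * (-f θ'))
    (hgf : ∀ θ θ' : Θ, θ < θ' → 0 < f θ → g θ < 0 → g θ' < 0 →
      f θ' * (-g θ) ≥ f θ * (-g θ')) :
    SingleCrossing (fun θ => f θ + g θ) := by
  intro θ θ' hlt
  have hf1 := hf θ θ' hlt
  have hg1 := hg θ θ' hlt
  constructor
  · intro hs
    simp only at hs ⊢
    rcases lt_or_ge (f θ) 0 with hfθ | hfθ
    · have hgθ : 0 < g θ := by linarith
      have hg' : 0 < g θ' := hg1.2 hgθ
      rcases lt_or_ge (f θ') 0 with hf' | hf'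
      · have h2 := hfg θ θ' hlt hgθ hfθ hf'
        nlinarith
      · linarith
    · rcases lt_or_ge (g θ) 0 with hgθ | hgθ
      · have hfp : 0 < f θ := by linarith
        have hf' : 0 < f θ' := hf1.2 hfp
        rcases lt_or_ge (g θ') 0 with hg' | hg'
        · have h2 := hgf θ θ' hlt hfp hgθ hg'
          nlinarith
        · linarith
      · have := hf1.1 hfθ; have := hg1.1 hgθ; linarith
  · intro hs
    simp only at hs ⊢
    rcases lt_or_ge (f θ) 0 with hfθ | hfθ
    · have hgθ : 0 < g θ := by linarith
      have hg' : 0 < g θ' := hg1.2 hgθ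
      rcases lt_or_ge (f θ') 0 with hf' | hf'
      · have h2 := hfg θ θ' hlt hgθ hfθ hf'
        nlinarith
      · linarith
    · rcases lt_or_ge (g θ) 0 with hgθ | hgθ
      · have hfp : 0 < f θ := by linarith
        have hf' : 0 < f θ' := hf1.2 hfp
        rcases lt_or_ge (g θ') 0 with hg' | hg'
        · have h2 := hgf θ θ' hlt hfp hgθ hg'
          nlinarith
        · linarith
      · rcases lt_or_ge 0 (f θ) with hfp | hfz
        · have := hf1.2 hfp; have := hg1.1 hgθ; linarith
        · have hgp : 0 < g θ := by linarith
          have := hg1.2 hgp; have := hf1.1 hfθ; linarith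
end

section
/- Let Θ = {θ1, θ2} (θ1 < θ2), A = {a1, a2} (a1 < a2), prior μ ∈ (0,1) on θ1, and data given by q11 = q(a1|θ1), q12 = q(a1|θ2) ∈ (0,1). If q11 > q12, then there exist real numbers u(ai, θj) satisfying the strict single crossing property in (a,θ) such that the two NIAS inequalities hold: μ·q11·(u(a1,θ1) − u(a2,θ1)) + (1−μ)·q12·(u(a1,θ2) − u(a2,θ2)) ≥ 0 and μ·(1−q11)·(u(a2,θ1) − u(a1,θ1)) + (1−μ)·(1−q12)·(u(a2,θ2) − u(a1,θ2)) ≥ 0, with at least one strict. -/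
/-- Proposition 1, sufficiency: if the binary data is MLR-ordered
(q11 > q12), there is a strict single crossing utility satisfying the NIAS
inequalities with at least one strict. -/
theorem binary_sufficiency (μ q11 q12 : ℝ)
    (hμ0 : 0 < μ) (hμ1 : μ < 1)
    (h110 : 0 < q11) (h111 : q11 < 1)
    (h120 : 0 < q12) (h121 : q12 < 1)
    (hmlr : q11 > q12) :
    ∃ u11 u21 u12 u22 : ℝ,
      ((u11 ≤ u21 → u12 ≤ u22) ∧ (u11 < u21 → u12 < u22)) ∧
      μ * q11 * (u11 - u21) + (1 - μ) * q12 * (u12 - u22) ≥ 0 ∧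
      μ * (1 - q11) * (u21 - u11) + (1 - μ) * (1 - q12) * (u22 - u12) ≥ 0 ∧
      (μ * q11 * (u11 - u21) + (1 - μ) * q12 * (u12 - u22) > 0 ∨
       μ * (1 - q11) * (u21 - u11) + (1 - μ) * (1 - q12) * (u22 - u12) > 0) := by
  refine ⟨(1 - μ) * q12, 0, 0, μ * q11, ⟨?_, ?_⟩, ?_, ?_, Or.inr ?_⟩
  · intro h; nlinarith
  · intro h; nlinarith
  · ring_nf; nlinarith
  · nlinarith [mul_pos hμ0 (sub_pos.mpr hμ1), sub_pos.mpr hmlr]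
  · nlinarith [mul_pos (mul_pos hμ0 (sub_pos.mpr hμ1)) (sub_pos.mpr hmlr)]
end

section
/- Let Θ = {θ1, θ2}, A = {a1, a2}, with q11 = q(a1|θ1), q12 = q(a1|θ2) ∈ (0,1). Suppose u : A × Θ → ℝ satisfies the strict single crossing property and the NIAS inequalities: q11·(u(a1,θ1) − u(a2,θ1)) + q12·(u(a1,θ2) − u(a2,θ2)) ≥ 0 and (1−q11)·(u(a2,θ1) − u(a1,θ1)) + (1−q12)·(u(a2,θ2) − u(a1,θ2)) ≥ 0, with at least one strict. Then u(a1,θ1) > u(a2,θ1), and q11 > q12 (the dataset is MLR-ordered). -/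
/-- Proposition 1, necessity: a strict single crossing utility
satisfying the NIAS inequalities forces u11 > u21 and q11 > q12. -/
theorem binary_necessity (q11 q12 u11 u21 u12 u22 : ℝ)
    (h110 : 0 < q11) (h111 : q11 < 1)
    (h120 : 0 < q12) (h121 : q12 < 1)
    (hscp : (u11 ≤ u21 → u12 ≤ u22) ∧ (u11 < u21 → u12 < u22))
    (hnias1 : q11 * (u11 - u21) + q12 * (u12 - u22) ≥ 0)
    (hnias2 : (1 - q11) * (u21 - u11) + (1 - q12) * (u22 - u12) ≥ 0)
    (hstrict : q11 * (u11 - u21) + q12 * (u12 - u22) > 0 ∨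
      (1 - q11) * (u21 - u11) + (1 - q12) * (u22 - u12) > 0) :
    u11 > u21 ∧ q11 > q12 := by
  have hu : u11 > u21 := by
    by_contra h
    push_neg at h
    have h2 := hscp.1 h
    -- both NIAS terms nonpositive, so equality everywhere
    have e1 : u11 = u21 := by nlinarith
    have e2 : u12 = u22 := by nlinarith
    rcases hstrict with hs | hs <;> nlinarith
  -- now u22 > u12 from NIAS2
  have hy : u22 > u12 := by nlinarith
  refine ⟨hu, ?_⟩
  rcases hstrict with hs | hs <;>
    nlinarith [mul_pos (sub_pos.2 hu) (sub_pos.2 hy),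
      mul_le_mul_of_nonneg_left hnias2 (le_of_lt (sub_pos.2 hu)),
      mul_le_mul_of_nonneg_left hnias1 (le_of_lt (sub_pos.2 hy))]
end

section
/- In the binary-state binary-action setting, if the data (q11, q12) with q11 > q12 is rationalized by any utility function u satisfying the NIAS inequalities (q11·(u11−u21) + q12·(u12−u22) ≥ 0 and (1−q11)·(u21−u11) + (1−q12)·(u22−u12) ≥ 0 with at least one strict, where uij = u(ai,θj)), then u must satisfy the strict single crossing property, i.e., u11 > u21 and (u22 − u12)/(u11 − u21) lies between (1−q11)/(1−q12) and q11/q12. -/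
/-- Corollary to Proposition 1: MLR-ordered binary data can only
be rationalized by single crossing utilities: NIAS forces u11 > u21 and pins
the utility-difference ratio between the likelihood ratios. -/
theorem binary_only_single_crossing (q11 q12 u11 u21 u12 u22 : ℝ)
    (h110 : 0 < q11) (h111 : q11 < 1)
    (h120 : 0 < q12) (h121 : q12 < 1)
    (hmlr : q11 > q12)
    (hnias1 : q11 * (u11 - u21) + q12 * (u12 - u22) ≥ 0)
    (hnias2 : (1 - q11) * (u21 - u11) + (1 - q12) * (u22 - u12) ≥ 0)
    (hstrict : q11 * (u11 - u21) + q12 * (u12 - u22) > 0 ∨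
      (1 - q11) * (u21 - u11) + (1 - q12) * (u22 - u12) > 0) :
    u11 > u21 ∧
    (1 - q11) / (1 - q12) ≤ (u22 - u12) / (u11 - u21) ∧
    (u22 - u12) / (u11 - u21) ≤ q11 / q12 := by
  set a := u11 - u21 with ha
  set b := u22 - u12 with hb
  have h1 : q11 * a ≥ q12 * b := by nlinarith [hnias1]
  have h2 : (1 - q12) * b ≥ (1 - q11) * a := by nlinarith [hnias2]
  have hq12' : (0:ℝ) < 1 - q12 := by linarith
  have hq11' : (0:ℝ) < 1 - q11 := by linarith
  have hage : a ≥ 0 := by nlinarith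
  have hapos : a > 0 := by
    rcases lt_or_eq_of_le hage with h | h
    · exact h
    · exfalso
      have hb0 : b ≤ 0 := by nlinarith
      have hb0' : b ≥ 0 := by nlinarith
      rcases hstrict with h' | h' <;> nlinarith
  refine ⟨by linarith, ?_, ?_⟩
  · rw [div_le_div_iff₀ hq12' hapos]; nlinarith
  · rw [div_le_div_iff₀ hapos h120]; nlinarith
end

section
/- Let S and Θ be finite linearly ordered sets, and μ : S × Θ → ℝ≥0 a family of state-conditional signal probabilities that is MLR-ordered: s' > s, θ' > θ imply μ(s'|θ')·μ(s|θ) ≥ μ(s'|θ)·μ(s|θ'). Let G, G' ⊆ S be nonempty with G' ≥_sso G in the strong set order and G ∩ G' = ∅ (so every element of G' strictly exceeds every element of G). Define p(θ) = Σ_{s∈G} μ(s|θ) and p'(θ) = Σ_{s∈G'} μ(s|θ). Then for θ' > θ, p'(θ')·p(θ) ≥ p'(θ)·p(θ'). -/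
/-- key step of Lemma 2: sums of MLR-ordered signal probabilities
over disjoint, strong-set-order ranked sets of signals inherit the MLR order. -/
theorem mlr_sum_over_sso_sets {S Θ : Type*}
    [Fintype S] [LinearOrder S] [Fintype Θ] [LinearOrder Θ]
    (μ : S → Θ → ℝ)
    (hnonneg : ∀ s θ, 0 ≤ μ s θ)
    (hmlr : ∀ s s' θ θ', s < s' → θ < θ' → μ s' θ' * μ s θ ≥ μ s' θ * μ s θ')
    (G G' : Finset S)
    (hG : G.Nonempty) (hG' : G'.Nonempty)
    (hsso : ∀ x' ∈ G', ∀ x ∈ G, max x x' ∈ G' ∧ min x x' ∈ G)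
    (hdisj : Disjoint G G') :
    ∀ θ θ' : Θ, θ < θ' →
      (∑ s ∈ G', μ s θ') * (∑ s ∈ G, μ s θ) ≥
      (∑ s ∈ G', μ s θ) * (∑ s ∈ G, μ s θ') := by
  intro θ θ' hθ
  have hlt : ∀ s' ∈ G', ∀ s ∈ G, s < s' := by
    intro s' hs' s hs
    rcases lt_trichotomy s s' with h | h | h
    · exact h
    · exact absurd (h ▸ hs') (Finset.disjoint_left.mp hdisj hs)
    · have := hsso s' hs' s hs
      rw [max_eq_left h.le] at this
      exact absurd this.1 (Finset.disjoint_left.mp hdisj hs)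
  rw [Finset.sum_mul_sum, Finset.sum_mul_sum]
  apply Finset.sum_le_sum
  intro s' hs'
  apply Finset.sum_le_sum
  intro s hs
  exact hmlr s s' θ θ' (hlt s' hs' s hs) hθ
end
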